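/- Let p, q, c, k, l be integers with 0 < p < q, q ≥ 2, c ≥ 2. Then there do not exist integers k, l satisfying simultaneously: 1 + c·k + c/q > 0, b + c·l + (p/q)·c > 0, and 1 + c·k + b + c·l + (p/q)·c < 1, where b is an integer with 0 < b < c. (All inequalities in ℚ.) -/

import Mathlib

/-!
The second and third inequalities together force `c * k < 0`, so the integer `k` is at most `-1`.
The first inequality then reads `0 < 1 + c * k + c / q ≤ 1 - c + c / 2 = 1 - c / 2`, impossible for `c ≥ 2`.
-/

section

variable {K : Type*} [Field K] [LinearOrder K] [IsStrictOrderedRing K]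

lemma mul_intCast_le_neg_of_mul_neg {c : K} {k : ℤ} (hc : 0 < c) (h : c * k < 0) :
    c * k ≤ -c := by
  have hk : (k : K) < 0 := (pos_iff_neg_of_mul_neg h).mp hc
  have hk' : (k : K) ≤ -1 := by
    have : k < 0 := by exact_mod_cast hk
    exact_mod_cast (by omega : k ≤ -1)
  nlinarith

lemma one_add_mul_intCast_add_div_nonpos {c q : K} {k : ℤ} (hc : 2 ≤ c) (hq : 2 ≤ q)
    (h : c * k < 0) : 1 + c * k + c / q ≤ 0 := by
  have hck := mul_intCast_le_neg_of_mul_neg (by linarith) h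
  have hdiv : c / q ≤ c / 2 := div_le_div_of_nonneg_left (by linarith) two_pos hq
  linarith

end

theorem stmt4_general (p q b c : ℤ)
    (hq : 2 ≤ q) (hc : 2 ≤ c) :
    ¬ ∃ k l : ℤ,
      (0 : ℚ) < 1 + c * k + c / q ∧
      (0 : ℚ) < b + c * l + (p / q) * c ∧
      (1 : ℚ) + c * k + b + c * l + (p / q) * c < 1 := by
  rintro ⟨k, l, h1, h2, h3⟩
  have hck : (c : ℚ) * k < 0 := by linarith
  have := one_add_mul_intCast_add_div_nonpos (q := (q : ℚ))
    (by exact_mod_cast hc) (by exact_mod_cast hq) hck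
  linarith

/-- Case a=1: no integers k, l satisfy the three flipping inequalities. -/
theorem stmt4 (p q b c : ℤ) (hp : 0 < p) (hpq : p < q) (hgcd : Int.gcd p q = 1)
    (hq : 2 ≤ q) (hb : 0 < b) (hbc : b < c) (hc : 2 ≤ c) :
    ¬ ∃ k l : ℤ,
      (0 : ℚ) < 1 + c * k + c / q ∧
      (0 : ℚ) < b + c * l + (p / q) * c ∧
      (1 : ℚ) + c * k + b + c * l + (p / q) * c < 1 :=
  stmt4_general p q b c hq hc
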